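/- With the matrices T(r,s) indexed by α,β ∈ (1/k)ℤⁿ/ℤⁿ given by T(r,s)_{βα} = δ_{α−β,−[r/k]} e^{−2πi s·α} e^{−πi r·s/k} η_k(r,s), the Hilbert–Schmidt pairing tr(T(r,s) T(t,u)*) vanishes unless (r,s) ≡ (t,u) mod k, and when (r,s) ≡ (t,u) mod k it equals ± kⁿ η_k(r,s) η_k(t,u), with sign +1 when (r,s) = (t,u). -/

import Mathlib

/-!
Each entry of `T(r,s)` factors as the shift indicator `[β ≡ α + r]`, the character
`α ↦ e^{-2πi s·α}` and the scalar weight `e^{-πi r·s/k} η_k(r,s)`. In the trace of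
`T(r,s) T(t,u)*`, the sum over `β` of the product of two shift indicators is `1` if `r ≡ t` and
`0` otherwise, independently of `α`; what remains is the character sum over `α` of
`e^{-2πi (s-u)·α}`, which is `kⁿ` if `s ≡ u` and `0` otherwise. In the congruent case
`r·s - t·u = k m`, so the two weights combine to `e^{-πi m} η_k(r,s) η_k(t,u)` with
`e^{-πi m} = (-1)^m`, and `m = 0` when `(r,s) = (t,u)`.
-/

open Matrix

/-- Coercion of an integer vector to a real vector. -/
def toR {n : ℕ} (v : Fin n → ℤ) : Fin n → ℝ := fun i => (v i : ℝ)

/-- The coefficient `η_k(r,s) = exp(-(π/(2k))((s - Xr)·Y⁻¹(s - Xr) + r·Yr))`. -/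
noncomputable def eta {n : ℕ} (X Y : Matrix (Fin n) (Fin n) ℝ)
    (k : ℕ) (r s : Fin n → ℤ) : ℝ :=
  Real.exp (-(Real.pi / (2 * k)) *
    ((toR s - X.mulVec (toR r)) ⬝ᵥ Y⁻¹.mulVec (toR s - X.mulVec (toR r)) +
      toR r ⬝ᵥ Y.mulVec (toR r)))

/-- The matrix of the Toeplitz operator of the pure phase `F_{r,s}` in the basis of theta
functions: `T(r,s)_{βα} = δ_{α-β,-[r/k]} e^{-2πi s·α} e^{-πi r·s/k} η_k(r,s)`, with
residues `α, β ∈ (1/k)ℤⁿ/ℤⁿ` represented by `Fin n → Fin k`. -/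
noncomputable def Tmat {n : ℕ} (X Y : Matrix (Fin n) (Fin n) ℝ) (k : ℕ)
    (r s : Fin n → ℤ) : Matrix (Fin n → Fin k) (Fin n → Fin k) ℂ :=
  Matrix.of fun β α =>
    (if ∀ i, (k : ℤ) ∣ (((α i : ℕ) : ℤ) - ((β i : ℕ) : ℤ) + r i) then 1 else 0) *
      Complex.exp ((-2 * Real.pi * Complex.I) *
        ((∑ i, (s i : ℝ) * (((α i : ℕ) : ℝ) / k) : ℝ) : ℂ)) *
      Complex.exp ((-Real.pi * Complex.I) *
        (((∑ i, (r i : ℝ) * (s i : ℝ)) / k : ℝ) : ℂ)) * (eta X Y k r s : ℂ)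

open Complex Finset
open scoped Real Fin.IntCast ComplexConjugate

lemma Fin.eq_intCast_iff_dvd {k : ℕ} [NeZero k] (b : Fin k) (x : ℤ) :
    b = (x : Fin k) ↔ (k : ℤ) ∣ x - b := by
  have hk : (0 : ℤ) < k := by exact_mod_cast Nat.pos_of_neZero k
  have hb : ((b : ℕ) : ℤ) < k := by exact_mod_cast b.isLt
  rw [Fin.ext_iff, Fin.val_intCast, ← Int.modEq_iff_dvd, Int.ModEq,
    Int.emod_eq_of_lt (by positivity) hb]
  have := Int.emod_nonneg x hk.ne'
  omega

lemma dvd_dotProduct_sub_dotProduct {n : ℕ} {R : Type*} [CommRing R] {c : R}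
    {r s t u : Fin n → R} (hrt : ∀ i, c ∣ r i - t i) (hsu : ∀ i, c ∣ s i - u i) :
    c ∣ r ⬝ᵥ s - t ⬝ᵥ u := by
  have hsplit : r ⬝ᵥ s - t ⬝ᵥ u = (r - t) ⬝ᵥ s + t ⬝ᵥ (s - u) := by
    simp only [sub_dotProduct, dotProduct_sub]
    ring
  rw [hsplit]
  exact dvd_add (dvd_sum fun i _ => (hrt i).mul_right _) (dvd_sum fun i _ => (hsu i).mul_left _)

namespace Complex

lemma exp_neg_pi_mul_I_mul_intCast (m : ℤ) :
    exp ((-π * I) * ((m : ℝ) : ℂ)) = (((-1 : ℝ) ^ m : ℝ) : ℂ) := by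
  rw [ofReal_intCast, mul_comm, exp_int_mul, neg_mul, exp_neg, exp_pi_mul_I]
  push_cast
  simp

lemma sum_exp_neg_two_pi_I_mul_div {k : ℕ} [NeZero k] (d : ℤ) :
    ∑ a : Fin k, exp ((-2 * π * I) * ((d * ((a : ℕ) / k : ℝ) : ℝ) : ℂ)) =
      if (k : ℤ) ∣ d then (k : ℂ) else 0 := by
  have hω : IsPrimitiveRoot (exp (2 * π * I / k)) k := isPrimitiveRoot_exp k (NeZero.ne k)
  set ζ := exp (2 * π * I / k) ^ (-d) with hζ
  have hterm (a : ℕ) : exp ((-2 * π * I) * ((d * (a / k : ℝ) : ℝ) : ℂ)) = ζ ^ a := by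
    rw [hζ, ← exp_int_mul, ← exp_nat_mul]
    congr 1
    push_cast
    ring
  simp only [hterm, Fin.sum_univ_eq_sum_range (ζ ^ ·)]
  split_ifs with hd
  · have hζ1 : ζ = 1 := (hω.zpow_eq_one_iff_dvd _).2 (dvd_neg.2 hd)
    simp [hζ1]
  · have hζ1 : ζ ≠ 1 := fun h => hd (dvd_neg.1 ((hω.zpow_eq_one_iff_dvd _).1 h))
    have hζk : ζ ^ k = 1 := by
      rw [hζ, ← zpow_natCast, ← _root_.zpow_mul, hω.zpow_eq_one_iff_dvd]
      exact dvd_mul_left _ _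
    rw [geom_sum_eq hζ1, hζk, sub_self, zero_div]

end Complex

namespace Tmat

variable {n k : ℕ}

noncomputable def shiftIndicator (k : ℕ) (r : Fin n → ℤ) (α β : Fin n → Fin k) : ℂ :=
  if ∀ i, (k : ℤ) ∣ (((α i : ℕ) : ℤ) - ((β i : ℕ) : ℤ) + r i) then 1 else 0

noncomputable def character (k : ℕ) (s : Fin n → ℤ) (α : Fin n → Fin k) : ℂ :=
  exp ((-2 * π * I) * ((∑ i, (s i : ℝ) * (((α i : ℕ) : ℝ) / k) : ℝ) : ℂ))

noncomputable def weight (X Y : Matrix (Fin n) (Fin n) ℝ) (k : ℕ) (r s : Fin n → ℤ) : ℂ :=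
  exp ((-π * I) * (((∑ i, (r i : ℝ) * (s i : ℝ)) / k : ℝ) : ℂ)) * (eta X Y k r s : ℂ)

lemma apply_eq (X Y : Matrix (Fin n) (Fin n) ℝ) (k : ℕ) (r s : Fin n → ℤ)
    (β α : Fin n → Fin k) :
    Tmat X Y k r s β α = shiftIndicator k r α β * character k s α * weight X Y k r s := by
  simp only [Tmat, of_apply, shiftIndicator, character, weight, mul_assoc]

lemma conj_shiftIndicator (r : Fin n → ℤ) (α β : Fin n → Fin k) :
    conj (shiftIndicator k r α β) = shiftIndicator k r α β := by
  unfold shiftIndicator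
  split <;> simp

lemma character_mul_conj (s u : Fin n → ℤ) (α : Fin n → Fin k) :
    character k s α * conj (character k u α) = character k (s - u) α := by
  simp only [character, ← exp_conj, ← exp_add, map_mul, map_neg, map_ofNat, conj_I, conj_ofReal]
  congr 1
  simp only [Pi.sub_apply, Int.cast_sub, sub_mul, sum_sub_distrib]
  push_cast
  ring

lemma weight_mul_conj (X Y : Matrix (Fin n) (Fin n) ℝ) (k : ℕ) (r s t u : Fin n → ℤ) :
    weight X Y k r s * conj (weight X Y k t u) =
      exp ((-π * I) * (((r ⬝ᵥ s - t ⬝ᵥ u : ℤ) : ℝ) / k : ℝ)) *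
        ((eta X Y k r s * eta X Y k t u : ℝ) : ℂ) := by
  have hphase : exp ((-π * I) * (((r ⬝ᵥ s - t ⬝ᵥ u : ℤ) : ℝ) / k : ℝ)) =
      exp ((-π * I) * (((∑ i, (r i : ℝ) * (s i : ℝ)) / k : ℝ) : ℂ)) *
        conj (exp ((-π * I) * (((∑ i, (t i : ℝ) * (u i : ℝ)) / k : ℝ) : ℂ))) := by
    simp only [← exp_conj, ← exp_add, map_mul, map_neg, conj_I, conj_ofReal]
    congr 1
    push_cast [dotProduct]
    ring
  rw [hphase, weight, weight, map_mul, conj_ofReal]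
  push_cast
  ring

section Shift

variable [NeZero k]

def shift (r : Fin n → ℤ) (α : Fin n → Fin k) : Fin n → Fin k :=
  fun i => ((α i : ℤ) + r i : ℤ)

lemma shiftIndicator_eq_ite (r : Fin n → ℤ) (α β : Fin n → Fin k) :
    shiftIndicator k r α β = if β = shift r α then 1 else 0 := by
  simp only [shiftIndicator, funext_iff, shift, Fin.eq_intCast_iff_dvd, add_sub_right_comm]

lemma shift_eq_shift_iff (r t : Fin n → ℤ) (α : Fin n → Fin k) :
    shift r α = shift t α ↔ ∀ i, (k : ℤ) ∣ r i - t i := by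
  refine funext_iff.trans (forall_congr' fun i => ?_)
  have hr := (Fin.eq_intCast_iff_dvd (shift r α i) (α i + r i)).1 rfl
  change shift r α i = ((α i + t i : ℤ) : Fin k) ↔ _
  rw [Fin.eq_intCast_iff_dvd, ← dvd_sub_right hr, sub_sub_sub_cancel_right,
    add_sub_add_left_eq_sub]

lemma sum_shiftIndicator_mul (r t : Fin n → ℤ) (α : Fin n → Fin k) :
    ∑ β, shiftIndicator k r α β * shiftIndicator k t α β =
      if ∀ i, (k : ℤ) ∣ r i - t i then 1 else 0 := by
  split_ifs with h <;> rw [← shift_eq_shift_iff r t α] at h <;>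
    simp [shiftIndicator_eq_ite, h, eq_comm]

lemma sum_character (s : Fin n → ℤ) :
    ∑ α, character k s α = if ∀ i, (k : ℤ) ∣ s i then (k : ℂ) ^ n else 0 := by
  have hprod (α : Fin n → Fin k) : character k s α =
      ∏ i, exp ((-2 * π * I) * ((s i * ((α i : ℕ) / k : ℝ) : ℝ) : ℂ)) := by
    rw [character, ← exp_sum, ofReal_sum, mul_sum]
  simp only [hprod]
  rw [← Fintype.prod_sum
    (fun i (a : Fin k) => exp ((-2 * π * I) * ((s i * ((a : ℕ) / k : ℝ) : ℝ) : ℂ)))]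
  simp only [sum_exp_neg_two_pi_I_mul_div, Fintype.prod_ite_zero, prod_const, card_univ,
    Fintype.card_fin]

lemma trace_mul_conjTranspose (X Y : Matrix (Fin n) (Fin n) ℝ) (r s t u : Fin n → ℤ) :
    (Tmat X Y k r s * (Tmat X Y k t u)ᴴ).trace =
      (if (∀ i, (k : ℤ) ∣ r i - t i) ∧ (∀ i, (k : ℤ) ∣ s i - u i) then (k : ℂ) ^ n else 0) *
        (weight X Y k r s * conj (weight X Y k t u)) := by
  calc (Tmat X Y k r s * (Tmat X Y k t u)ᴴ).trace
      = ∑ α, (∑ β, shiftIndicator k r α β * shiftIndicator k t α β) *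
          character k (s - u) α * (weight X Y k r s * conj (weight X Y k t u)) := by
        simp only [trace, diag_apply, mul_apply, conjTranspose_apply, apply_eq, star_def,
          map_mul, conj_shiftIndicator, ← character_mul_conj, sum_mul]
        rw [sum_comm]
        exact sum_congr rfl fun α _ => sum_congr rfl fun β _ => by ring
    _ = (if ∀ i, (k : ℤ) ∣ r i - t i then 1 else 0) * (∑ α, character k (s - u) α) *
          (weight X Y k r s * conj (weight X Y k t u)) := by
        simp only [sum_shiftIndicator_mul, mul_sum, sum_mul]
    _ = _ := by
        rw [sum_character, ite_zero_mul_ite_zero, one_mul]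
        rfl

end Shift

end Tmat

theorem statement14_general {n : ℕ} (X Y : Matrix (Fin n) (Fin n) ℝ)
    (k : ℕ) (hk : 0 < k) (r s t u : Fin n → ℤ) :
    (¬((∀ i, (k : ℤ) ∣ (r i - t i)) ∧ (∀ i, (k : ℤ) ∣ (s i - u i))) →
      (Tmat X Y k r s * (Tmat X Y k t u)ᴴ).trace = 0) ∧
    (((∀ i, (k : ℤ) ∣ (r i - t i)) ∧ (∀ i, (k : ℤ) ∣ (s i - u i))) →
      ∃ ε : ℝ, (ε = 1 ∨ ε = -1) ∧
        (Tmat X Y k r s * (Tmat X Y k t u)ᴴ).trace =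
          ((ε * k ^ n * eta X Y k r s * eta X Y k t u : ℝ) : ℂ) ∧
        ((r = t ∧ s = u) → ε = 1)) := by
  have : NeZero k := ⟨hk.ne'⟩
  rw [Tmat.trace_mul_conjTranspose]
  refine ⟨fun hc => by rw [if_neg hc, zero_mul], fun hc => ?_⟩
  obtain ⟨m, hm⟩ := dvd_dotProduct_sub_dotProduct hc.1 hc.2
  have hphase : (((r ⬝ᵥ s - t ⬝ᵥ u : ℤ) : ℝ) / k) = m := by
    rw [hm]
    push_cast
    field_simp
  refine ⟨(-1) ^ m, (Int.even_or_odd m).imp Even.neg_one_zpow Odd.neg_one_zpow, ?_, ?_⟩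
  · rw [if_pos hc, Tmat.weight_mul_conj, hphase, exp_neg_pi_mul_I_mul_intCast]
    push_cast
    ring
  · rintro ⟨rfl, rfl⟩
    have hm0 : m = 0 := by simpa [hk.ne'] using hm.symm
    rw [hm0, zpow_zero]

/-- the Hilbert–Schmidt pairing `tr(T(r,s) T(t,u)*)` vanishes unless
`(r,s) ≡ (t,u) mod k`, and when `(r,s) ≡ (t,u) mod k` it equals
`± kⁿ η_k(r,s) η_k(t,u)`, with sign `+1` when `(r,s) = (t,u)`. -/
theorem statement14 {n : ℕ} (X Y : Matrix (Fin n) (Fin n) ℝ)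
    (hX : Xᵀ = X) (hY : Y.PosDef) (k : ℕ) (hk : 0 < k) (r s t u : Fin n → ℤ) :
    (¬((∀ i, (k : ℤ) ∣ (r i - t i)) ∧ (∀ i, (k : ℤ) ∣ (s i - u i))) →
      (Tmat X Y k r s * (Tmat X Y k t u)ᴴ).trace = 0) ∧
    (((∀ i, (k : ℤ) ∣ (r i - t i)) ∧ (∀ i, (k : ℤ) ∣ (s i - u i))) →
      ∃ ε : ℝ, (ε = 1 ∨ ε = -1) ∧
        (Tmat X Y k r s * (Tmat X Y k t u)ᴴ).trace =
          ((ε * k ^ n * eta X Y k r s * eta X Y k t u : ℝ) : ℂ) ∧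
        ((r = t ∧ s = u) → ε = 1)) :=
  statement14_general X Y k hk r s t u
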